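/- arXiv:2502.12496 — 2 statements merged into one kernel-verified Lean document; each statement's English description precedes it below -/
import Mathlib

section
/- For every n ≥ 1, the n-th derivative of the logistic sigmoid σ(x) = 1/(1+e^{−x}) satisfies the sharper bound |σ^{(n)}(x)| ≤ (n^n / (n+1)^{n+1}) · n! for all real x. -/
open Real

/-- The logistic sigmoid function. -/
noncomputable def sigmoid (x : ℝ) : ℝ := 1 / (1 + Real.exp (-x))

/-!
Since `σ' = σ (1 - σ)`, the `n`-th derivative is a form `∑_{i + j = n + 1} aₙ(i, j) σ^i (1 - σ)^j`.
Differentiating `σ^i (1 - σ)^j` yields two monomials with coefficients `i` and `-j`, so the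
coefficient mass `∑ |aₙ(i, j)|` grows at most by the factor `i + j = n + 1` and is at most `n!`.
For `n ≥ 1` only monomials with `i, j ≥ 1` occur. On `[0, 1]` such a monomial is at most
`(i / (n + 1))^i (j / (n + 1))^j`, by `u ≤ exp (u - 1)` applied to `u = (n + 1) y / i` and
`u = (n + 1) (1 - y) / j`, and Bernoulli's inequality gives `i^i j^j ≤ n^n`.
-/

open Finset Finset.Nat

local notation "σ" => Real.sigmoid

theorem sigmoid_eq_real_sigmoid : _root_.sigmoid = σ := funext fun _ => one_div _

theorem sum_antidiagonal_add_two {M : Type*} [AddCommMonoid M] {n : ℕ} {f : ℕ × ℕ → M}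
    (h₀ : f (0, n + 2) = 0) (h₁ : f (n + 2, 0) = 0) :
    ∑ p ∈ antidiagonal (n + 2), f p = ∑ p ∈ antidiagonal n, f (p.1 + 1, p.2 + 1) := by
  rw [sum_antidiagonal_succ, sum_antidiagonal_succ', h₀, h₁, zero_add, zero_add]

/-- `sigmoidCoeff n (i, j)` is the coefficient of `σ^i (1 - σ)^j` in `σ⁽ⁿ⁾`; up to sign these
are the Eulerian numbers. -/
def sigmoidCoeff : ℕ → ℕ × ℕ → ℤ
  | 0, p => if p = (1, 0) then 1 else 0
  | n + 1, (i + 1, j + 1) =>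
    (i + 1) * sigmoidCoeff n (i + 1, j) - (j + 1) * sigmoidCoeff n (i, j + 1)
  | _ + 1, _ => 0

@[simp]
theorem sigmoidCoeff_succ_zero_left (n j : ℕ) : sigmoidCoeff (n + 1) (0, j) = 0 := rfl

@[simp]
theorem sigmoidCoeff_succ_zero_right (n i : ℕ) : sigmoidCoeff (n + 1) (i, 0) = 0 := by
  cases i <;> rfl

theorem sum_abs_sigmoidCoeff_le (n : ℕ) :
    ∑ p ∈ antidiagonal (n + 1), |sigmoidCoeff n p| ≤ n.factorial := by
  induction n with
  | zero => decide
  | succ n ih =>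
    rw [sum_antidiagonal_add_two (by simp) (by simp)]
    calc ∑ p ∈ antidiagonal n, |sigmoidCoeff (n + 1) (p.1 + 1, p.2 + 1)|
        ≤ ∑ p ∈ antidiagonal n, ((p.1 + 1) * |sigmoidCoeff n (p.1 + 1, p.2)|
            + (p.2 + 1) * |sigmoidCoeff n (p.1, p.2 + 1)|) := by
          gcongr with p
          refine (abs_sub _ _).trans_eq ?_
          rw [abs_mul, abs_mul]
          norm_cast
      _ = ∑ p ∈ antidiagonal (n + 1), p.1 * |sigmoidCoeff n p|
            + ∑ p ∈ antidiagonal (n + 1), p.2 * |sigmoidCoeff n p| := by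
          rw [sum_antidiagonal_succ, sum_antidiagonal_succ', sum_add_distrib]
          push_cast
          simp only [zero_mul, zero_add]
      _ = (n + 1) * ∑ p ∈ antidiagonal (n + 1), |sigmoidCoeff n p| := by
          rw [← sum_add_distrib, mul_sum]
          refine sum_congr rfl fun p hp => ?_
          rw [← add_mul, ← Nat.cast_add, mem_antidiagonal.mp hp, Nat.cast_succ]
      _ ≤ (n + 1).factorial := by
          push_cast [Nat.factorial_succ]
          gcongr

theorem hasDerivAt_sigmoid_pow_mul_one_sub_pow (i j : ℕ) (x : ℝ) :
    HasDerivAt (fun x => σ x ^ i * (1 - σ x) ^ j)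
      (i * σ x ^ i * (1 - σ x) ^ (j + 1) - j * σ x ^ (i + 1) * (1 - σ x) ^ j) x := by
  have hσ := hasDerivAt_sigmoid x
  refine ((hσ.fun_pow i).fun_mul ((hσ.const_sub 1).fun_pow j)).congr_deriv ?_
  cases i <;> cases j <;>
    simp only [Nat.cast_zero, Nat.cast_succ, zero_tsub, add_tsub_cancel_right, pow_zero, pow_succ] <;>
    ring

theorem hasDerivAt_sum_sigmoidCoeff (n : ℕ) (x : ℝ) :
    HasDerivAt
      (fun x => ∑ p ∈ antidiagonal (n + 1), (sigmoidCoeff n p : ℝ) * σ x ^ p.1 * (1 - σ x) ^ p.2)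
      (∑ p ∈ antidiagonal (n + 2), (sigmoidCoeff (n + 1) p : ℝ) * σ x ^ p.1 * (1 - σ x) ^ p.2)
      x := by
  have h := HasDerivAt.fun_sum (u := antidiagonal (n + 1)) fun p _ =>
    (hasDerivAt_sigmoid_pow_mul_one_sub_pow p.1 p.2 x).const_mul (sigmoidCoeff n p : ℝ)
  simp only [← mul_assoc] at h
  refine h.congr_deriv ?_
  rw [sum_antidiagonal_add_two (by simp) (by simp)]
  simp only [mul_sub, sum_sub_distrib]
  rw [sum_antidiagonal_succ, sum_antidiagonal_succ']
  simp only [CharP.cast_eq_zero, zero_mul, mul_zero, zero_add, ← sum_sub_distrib]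
  refine sum_congr rfl fun p _ => ?_
  simp only [sigmoidCoeff]
  push_cast
  ring

theorem iteratedDeriv_sigmoid (n : ℕ) :
    iteratedDeriv n σ = fun x =>
      ∑ p ∈ antidiagonal (n + 1), (sigmoidCoeff n p : ℝ) * σ x ^ p.1 * (1 - σ x) ^ p.2 := by
  induction n with
  | zero => ext x; simp [sigmoidCoeff]
  | succ n ih => ext x; rw [iteratedDeriv_succ, ih, (hasDerivAt_sum_sigmoidCoeff n x).deriv]

theorem pow_le_exp_mul_sub_one {u : ℝ} (hu : 0 ≤ u) (k : ℕ) : u ^ k ≤ exp (k * (u - 1)) := by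
  rw [exp_nat_mul]
  exact pow_le_pow_left₀ hu (by linarith [add_one_le_exp (u - 1)]) k

theorem pow_mul_one_sub_pow_le {y : ℝ} (hy₀ : 0 ≤ y) (hy₁ : y ≤ 1) {i j : ℕ} (hi : 0 < i)
    (hj : 0 < j) : y ^ i * (1 - y) ^ j ≤ (i / (i + j) : ℝ) ^ i * (j / (i + j) : ℝ) ^ j := by
  have hi' : (0 : ℝ) < i := Nat.cast_pos.mpr hi
  have hj' : (0 : ℝ) < j := Nat.cast_pos.mpr hj
  have hy₁' : 0 ≤ 1 - y := sub_nonneg.mpr hy₁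
  set u := (i + j) * y / i
  set v := (i + j) * (1 - y) / j
  have hu := pow_le_exp_mul_sub_one (u := u) (by positivity) i
  have hv := pow_le_exp_mul_sub_one (u := v) (by positivity) j
  have hexp : exp (i * (u - 1)) * exp (j * (v - 1)) = 1 := by
    have hsum : (i : ℝ) * (u - 1) + j * (v - 1) = 0 := by
      simp only [u, v]
      field_simp
      ring
    rw [← exp_add, hsum, exp_zero]
  calc y ^ i * (1 - y) ^ j = (i / (i + j) : ℝ) ^ i * (j / (i + j) : ℝ) ^ j * (u ^ i * v ^ j) := by
        simp only [u, v, div_pow, mul_pow]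
        field_simp
    _ ≤ _ * (exp (i * (u - 1)) * exp (j * (v - 1))) := by
        gcongr
    _ = _ := by rw [hexp, mul_one]

theorem succ_pow_succ_mul_succ_pow_succ_le (a b : ℕ) :
    (a + 1) ^ (a + 1) * (b + 1) ^ (b + 1) ≤ (a + b + 1) ^ (a + b + 1) := by
  have bernoulli : (a + 1) * (b + 1) ^ (b + 1) ≤ (a + b + 1) ^ (b + 1) := by
    have := pow_add_mul_le_add_pow (a := b + 1) (b := a) (by positivity) (by positivity) (b + 1)
    calc (a + 1) * (b + 1) ^ (b + 1) = (b + 1) ^ (b + 1) + (b + 1) * (b + 1) ^ b * a := by ring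
      _ ≤ (b + 1 + a) ^ (b + 1) := by simpa using this
      _ = (a + b + 1) ^ (b + 1) := by ring
  calc (a + 1) ^ (a + 1) * (b + 1) ^ (b + 1) = (a + 1) ^ a * ((a + 1) * (b + 1) ^ (b + 1)) := by
        ring
    _ ≤ (a + b + 1) ^ a * (a + b + 1) ^ (b + 1) := by gcongr; omega
    _ = (a + b + 1) ^ (a + b + 1) := by ring

theorem pow_succ_mul_one_sub_pow_succ_le {y : ℝ} (hy₀ : 0 ≤ y) (hy₁ : y ≤ 1) {a b n : ℕ}
    (hab : a + b = n) :
    y ^ (a + 1) * (1 - y) ^ (b + 1) ≤ (n + 1 : ℝ) ^ (n + 1) / (n + 2 : ℝ) ^ (n + 2) := by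
  have hsum : ((a + 1 : ℕ) : ℝ) + (b + 1 : ℕ) = n + 2 := by rw [← hab]; push_cast; ring
  have hpow := succ_pow_succ_mul_succ_pow_succ_le a b
  rw [hab] at hpow
  calc y ^ (a + 1) * (1 - y) ^ (b + 1)
      ≤ (((a + 1 : ℕ) : ℝ) / (n + 2)) ^ (a + 1) * (((b + 1 : ℕ) : ℝ) / (n + 2)) ^ (b + 1) := by
        simpa only [hsum] using pow_mul_one_sub_pow_le hy₀ hy₁ a.succ_pos b.succ_pos
    _ = (((a + 1) ^ (a + 1) * (b + 1) ^ (b + 1) : ℕ) : ℝ) / (n + 2 : ℝ) ^ (n + 2) := by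
        rw [div_pow, div_pow, div_mul_div_comm, ← pow_add, ← hab]
        push_cast
        ring_nf
    _ ≤ (n + 1 : ℝ) ^ (n + 1) / (n + 2 : ℝ) ^ (n + 2) := by
        gcongr
        exact_mod_cast hpow

theorem abs_sum_sigmoidCoeff_le {y : ℝ} (hy₀ : 0 ≤ y) (hy₁ : y ≤ 1) (n : ℕ) :
    |∑ p ∈ antidiagonal (n + 2), (sigmoidCoeff (n + 1) p : ℝ) * y ^ p.1 * (1 - y) ^ p.2|
      ≤ (n + 1 : ℝ) ^ (n + 1) / (n + 2 : ℝ) ^ (n + 2) * (n + 1).factorial := by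
  set M : ℝ := (n + 1 : ℝ) ^ (n + 1) / (n + 2 : ℝ) ^ (n + 2)
  rw [sum_antidiagonal_add_two (by simp) (by simp)]
  calc _ ≤ ∑ p ∈ antidiagonal n, |(sigmoidCoeff (n + 1) (p.1 + 1, p.2 + 1) : ℝ)| * M := by
        refine (abs_sum_le_sum_abs _ _).trans (sum_le_sum fun p hp => ?_)
        rw [mul_assoc, abs_mul, abs_of_nonneg (by bound : 0 ≤ y ^ (p.1 + 1) * (1 - y) ^ (p.2 + 1))]
        gcongr
        exact pow_succ_mul_one_sub_pow_succ_le hy₀ hy₁ (mem_antidiagonal.mp hp)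
    _ = M * ∑ p ∈ antidiagonal (n + 2), |(sigmoidCoeff (n + 1) p : ℝ)| := by
        rw [← sum_mul, mul_comm, sum_antidiagonal_add_two (by simp) (by simp)]
    _ ≤ M * (n + 1).factorial := by
        gcongr
        exact_mod_cast sum_abs_sigmoidCoeff_le (n + 1)

/-- For every `n ≥ 1`, `|σ^{(n)}(x)| ≤ (n^n / (n+1)^{n+1})·n!` for all real `x`. -/
theorem abs_iteratedDeriv_sigmoid_le_sharp (n : ℕ) (hn : 1 ≤ n) (x : ℝ) :
    |iteratedDeriv n _root_.sigmoid x|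
      ≤ ((n : ℝ) ^ n / ((n : ℝ) + 1) ^ (n + 1)) * (n.factorial : ℝ) := by
  obtain ⟨m, rfl⟩ := Nat.exists_eq_add_of_le' hn
  rw [sigmoid_eq_real_sigmoid, iteratedDeriv_sigmoid]
  convert abs_sum_sigmoidCoeff_le (sigmoid_nonneg x) (sigmoid_le_one x) m using 4 <;>
    push_cast <;> ring
end

section
/- For arbitrary real sequences (A_ν) and (B_ν) indexed by finitely supported multiindices and any multiindex ν, ∑_{m ≤ ν} C(ν,m) (∑_{w ≤ m} A_w S(m,w)) (∑_{u ≤ ν−m} B_u S(ν−m,u)) = ∑_{m ≤ ν} (∑_{w ≤ m} C(m,w) A_w B_{m−w}) S(ν,m). -/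
open Finset

/-- Stirling numbers of the second kind. -/
def stirling : ℕ → ℕ → ℕ
  | 0, 0 => 1
  | 0, _ + 1 => 0
  | _ + 1, 0 => 0
  | n + 1, k + 1 => (k + 1) * stirling n (k + 1) + stirling n k

/-- `C(ν,m) = ∏_j C(ν_j, m_j)` for multiindices. -/
def mchoose (ν m : ℕ →₀ ℕ) : ℕ := ∏ j ∈ ν.support, (ν j).choose (m j)

/-- `S(μ,w) = ∏_j S(μ_j, w_j)`, a product of Stirling numbers of the second kind. -/
def mstirling (μ w : ℕ →₀ ℕ) : ℕ := ∏ j ∈ μ.support ∪ w.support, stirling (μ j) (w j)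

/-!
Both sides are bilinear in `A` and `B`, and the coefficient of `A w * B u` is
`∑_{m ≤ ν} C(ν,m) S(m,w) S(ν-m,u)` on the left and `C(w+u,w) S(ν,w+u)` on the right. These
agree coordinatewise by the one-variable identity `∑_k C(n,k) S(k,a) S(n-k,b) = C(a+b,a) S(n,a+b)`
(a partition into `a + b` blocks, `a` of them marked, is determined by the union `K` of the marked
blocks and partitions of `K` and of its complement), proved by induction on `n` from Pascal's rule
and the Stirling recurrence. Equivalently: the Stirling transform is substitution of `e^t - 1` into
exponential generating functions, hence multiplicative for the binomial convolution.
-/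

theorem stirling_eq_stirlingSecond : stirling = Nat.stirlingSecond := by
  funext n k
  induction n generalizing k with
  | zero => cases k <;> rfl
  | succ n ih =>
    cases k with
    | zero => rfl
    | succ k => simp only [stirling, Nat.stirlingSecond_succ_succ, ih]

namespace Nat

theorem sum_antidiagonal_choose_mul_stirlingSecond_succ_succ (n a b : ℕ) :
    ∑ p ∈ antidiagonal n,
        n.choose p.1 * (stirlingSecond p.1 a * stirlingSecond (p.2 + 1) (b + 1)) =
      (b + 1) * ∑ p ∈ antidiagonal n,
          n.choose p.1 * (stirlingSecond p.1 a * stirlingSecond p.2 (b + 1)) +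
        ∑ p ∈ antidiagonal n, n.choose p.1 * (stirlingSecond p.1 a * stirlingSecond p.2 b) := by
  simp only [stirlingSecond_succ_succ, mul_sum, ← sum_add_distrib]
  exact sum_congr rfl fun p _ => by ring

theorem sum_antidiagonal_choose_mul_stirlingSecond (n a b : ℕ) :
    ∑ p ∈ antidiagonal n, n.choose p.1 * (stirlingSecond p.1 a * stirlingSecond p.2 b) =
      (a + b).choose a * stirlingSecond n (a + b) := by
  induction n generalizing a b with
  | zero => cases a <;> cases b <;> simp [stirlingSecond_eq_zero_of_lt]
  | succ n ih =>
    have pascal : ∑ p ∈ antidiagonal (n + 1),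
        (n + 1).choose p.1 * (stirlingSecond p.1 a * stirlingSecond p.2 b) =
        ∑ p ∈ antidiagonal n,
            n.choose p.1 * (stirlingSecond p.1 a * stirlingSecond (p.2 + 1) b) +
          ∑ p ∈ antidiagonal n,
            n.choose p.1 * (stirlingSecond p.1 b * stirlingSecond (p.2 + 1) a) := by
      have h := sum_antidiagonal_choose_succ_mul
        (fun i j => stirlingSecond i a * stirlingSecond j b) n
      simp only [cast_id] at h
      rw [h, add_right_inj, ← Nat.sum_antidiagonal_swap]
      simp only [Prod.fst_swap, Prod.snd_swap, mul_comm (stirlingSecond _ a)]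
    rw [pascal]
    rcases a with _ | a <;> rcases b with _ | b <;>
      simp only [stirlingSecond_succ_zero, mul_zero, sum_const_zero,
        sum_antidiagonal_choose_mul_stirlingSecond_succ_succ, ih]
    · simp
    · simp [stirlingSecond_succ_succ]
    · simp [stirlingSecond_succ_succ]
    · rw [show a + 1 + (b + 1) = a + b + 1 + 1 by omega,
        show b + 1 + (a + 1) = a + b + 1 + 1 by omega,
        show a + 1 + b = a + b + 1 by omega, show b + 1 + a = a + b + 1 by omega,
        choose_symm_of_eq_add (show a + b + 1 + 1 = (b + 1) + (a + 1) by omega),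
        choose_symm_of_eq_add (show a + b + 1 = (b + 1) + a by omega),
        stirlingSecond_succ_succ, choose_succ_succ (a + b + 1) a]
      ring

end Nat

namespace Finset

section Antidiagonal

variable {α M : Type*} [AddCommMonoid α] [PartialOrder α] [CanonicallyOrderedAdd α]
  [LocallyFiniteOrderBot α] [HasAntidiagonal α] [AddCommMonoid M]

theorem sum_Iic_tsub_eq_sum_antidiagonal [Sub α] [OrderedSub α] [AddLeftReflectLE α] (n : α)
    (f : α → α → M) :
    ∑ k ∈ Iic n, f k (n - k) = ∑ p ∈ antidiagonal n, f p.1 p.2 := by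
  refine sum_nbij' (fun k => (k, n - k)) Prod.fst (fun k hk => ?_) (fun p hp => ?_)
    (fun _ _ => rfl) (fun p hp => ?_) (fun _ _ => rfl)
  · exact HasAntidiagonal.mem_antidiagonal.2 (add_tsub_cancel_of_le (mem_Iic.1 hk))
  · exact mem_Iic.2 (HasAntidiagonal.mem_antidiagonal.1 hp ▸ le_self_add)
  · rw [← HasAntidiagonal.mem_antidiagonal.1 hp, add_tsub_cancel_left]

theorem sum_Iic_sum_antidiagonal [DecidableEq α] [DecidableLE α] (n : α) (f : α × α → M) :
    ∑ m ∈ Iic n, ∑ p ∈ antidiagonal m, f p = ∑ p ∈ Iic n ×ˢ Iic n with p.1 + p.2 ≤ n, f p := by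
  rw [← sum_fiberwise_of_maps_to (g := fun p : α × α => p.1 + p.2) (t := Iic n) (by simp)]
  refine sum_congr rfl fun m hm => sum_congr (ext fun p => ?_) fun _ _ => rfl
  rw [mem_Iic] at hm
  simp only [HasAntidiagonal.mem_antidiagonal, mem_filter, mem_product, mem_Iic]
  constructor
  · rintro rfl
    exact ⟨⟨⟨le_self_add.trans hm, le_add_self.trans hm⟩, hm⟩, rfl⟩
  · exact fun h => h.2

end Antidiagonal

theorem prod_sum_finsupp {ι α R : Type*} [Zero α] [CommSemiring R] (s : Finset ι)
    (t : ι → Finset α) (f : ι → α → R) :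
    ∏ i ∈ s, ∑ a ∈ t i, f i a = ∑ g ∈ s.finsupp t, ∏ i ∈ s, f i (g i) := by
  classical
  rw [prod_sum, Finset.finsupp, sum_map]
  refine sum_congr rfl fun g _ => ?_
  rw [← prod_attach s]
  refine prod_congr rfl fun i _ => ?_
  simp [Finsupp.indicator_of_mem i.2]

end Finset

theorem Finsupp.Iic_eq_finsupp {ι : Type*} [DecidableEq ι] (ν : ι →₀ ℕ) :
    Iic ν = ν.support.finsupp fun i => Iic (ν i) := by
  ext m
  simp only [mem_Iic, mem_finsupp_iff]
  refine ⟨fun h => ⟨Finsupp.support_mono h, fun i _ => h i⟩, fun h i => ?_⟩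
  by_cases hi : i ∈ ν.support
  · exact h.2 i hi
  · rw [Finsupp.notMem_support_iff.1 (mt (@h.1 i) hi)]
    exact zero_le

section Multiindex

variable {μ w : ℕ →₀ ℕ} {s : Finset ℕ}

theorem mstirling_eq_prod (hμ : μ.support ⊆ s) (hw : w.support ⊆ s) :
    mstirling μ w = ∏ j ∈ s, Nat.stirlingSecond (μ j) (w j) := by
  rw [mstirling, stirling_eq_stirlingSecond]
  refine prod_subset (union_subset hμ hw) fun j _ hj => ?_
  rw [mem_union, not_or, Finsupp.notMem_support_iff, Finsupp.notMem_support_iff] at hj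
  rw [hj.1, hj.2, Nat.stirlingSecond_zero]

theorem mchoose_eq_prod (hμ : μ.support ⊆ s) (hw : w ≤ μ) :
    mchoose μ w = ∏ j ∈ s, (μ j).choose (w j) := by
  refine prod_subset hμ fun j _ hj => ?_
  rw [Finsupp.notMem_support_iff] at hj
  rw [hj, Nat.le_zero.1 (hj ▸ hw j : w j ≤ 0), Nat.choose_zero_right]

theorem mstirling_eq_zero_of_not_le (h : ¬w ≤ μ) : mstirling μ w = 0 := by
  obtain ⟨j, hj⟩ := not_forall.1 (mt Finsupp.le_def.2 h)
  rw [mstirling_eq_prod subset_union_left subset_union_right]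
  refine prod_eq_zero (i := j) (mem_union_right _ (Finsupp.mem_support_iff.2 ?_))
    (Nat.stirlingSecond_eq_zero_of_lt (not_le.1 hj))
  omega

theorem sum_Iic_mchoose_mul_mstirling_mul_mstirling {ν u : ℕ →₀ ℕ} (hw : w ≤ ν) (hu : u ≤ ν) :
    ∑ m ∈ Iic ν, mchoose ν m * (mstirling m w * mstirling (ν - m) u) =
      mchoose (w + u) w * mstirling ν (w + u) := by
  have hwu : (w + u).support ⊆ ν.support :=
    Finsupp.support_add.trans (union_subset (Finsupp.support_mono hw) (Finsupp.support_mono hu))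
  calc ∑ m ∈ Iic ν, mchoose ν m * (mstirling m w * mstirling (ν - m) u)
      = ∑ m ∈ Iic ν, ∏ j ∈ ν.support, (ν j).choose (m j) *
          (Nat.stirlingSecond (m j) (w j) * Nat.stirlingSecond (ν j - m j) (u j)) := by
        refine sum_congr rfl fun m hm => ?_
        rw [mem_Iic] at hm
        rw [mchoose_eq_prod subset_rfl hm,
          mstirling_eq_prod (Finsupp.support_mono hm) (Finsupp.support_mono hw),
          mstirling_eq_prod (Finsupp.support_mono tsub_le_self) (Finsupp.support_mono hu),
          ← prod_mul_distrib, ← prod_mul_distrib]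
        rfl
    _ = ∏ j ∈ ν.support, ∑ k ∈ Iic (ν j), (ν j).choose k *
          (Nat.stirlingSecond k (w j) * Nat.stirlingSecond (ν j - k) (u j)) := by
        rw [Finsupp.Iic_eq_finsupp, prod_sum_finsupp]
    _ = ∏ j ∈ ν.support, (w j + u j).choose (w j) * Nat.stirlingSecond (ν j) (w j + u j) :=
        prod_congr rfl fun j _ =>
          (sum_Iic_tsub_eq_sum_antidiagonal (ν j) fun k l =>
            (ν j).choose k * (Nat.stirlingSecond k (w j) * Nat.stirlingSecond l (u j))).trans
          (Nat.sum_antidiagonal_choose_mul_stirlingSecond _ _ _)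
    _ = mchoose (w + u) w * mstirling ν (w + u) := by
        rw [mchoose_eq_prod hwu le_self_add, mstirling_eq_prod subset_rfl hwu, ← prod_mul_distrib]
        rfl

end Multiindex

section Transforms

variable {R : Type*} [CommSemiring R]

noncomputable def binomialConv (A B : (ℕ →₀ ℕ) → R) (ν : ℕ →₀ ℕ) : R :=
  ∑ m ∈ Iic ν, (mchoose ν m : R) * A m * B (ν - m)

noncomputable def stirlingTransform (A : (ℕ →₀ ℕ) → R) (m : ℕ →₀ ℕ) : R :=
  ∑ w ∈ Iic m, A w * (mstirling m w : R)

theorem stirlingTransform_eq_sum_Iic_of_le (A : (ℕ →₀ ℕ) → R) {m ν : ℕ →₀ ℕ} (h : m ≤ ν) :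
    stirlingTransform A m = ∑ w ∈ Iic ν, A w * (mstirling m w : R) := by
  refine sum_subset (Iic_subset_Iic.2 h) fun w _ hw => ?_
  rw [mstirling_eq_zero_of_not_le (mt mem_Iic.2 hw), Nat.cast_zero, mul_zero]

theorem binomialConv_eq_sum_antidiagonal (A B : (ℕ →₀ ℕ) → R) (m : ℕ →₀ ℕ) :
    binomialConv A B m =
      ∑ p ∈ antidiagonal m, (mchoose (p.1 + p.2) p.1 : R) * A p.1 * B p.2 := by
  refine (sum_congr rfl fun w hw => ?_).trans
    (sum_Iic_tsub_eq_sum_antidiagonal m fun w u => (mchoose (w + u) w : R) * A w * B u)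
  rw [add_tsub_cancel_of_le (mem_Iic.1 hw)]

variable (A B : (ℕ →₀ ℕ) → R) (ν : ℕ →₀ ℕ)

theorem binomialConv_stirlingTransform_eq_sum :
    binomialConv (stirlingTransform A) (stirlingTransform B) ν =
      ∑ w ∈ Iic ν, ∑ u ∈ Iic ν, A w * B u * (mchoose (w + u) w * mstirling ν (w + u) : ℕ) := by
  calc binomialConv (stirlingTransform A) (stirlingTransform B) ν
      = ∑ m ∈ Iic ν, ∑ w ∈ Iic ν, ∑ u ∈ Iic ν,
          A w * B u * (mchoose ν m * (mstirling m w * mstirling (ν - m) u) : ℕ) := by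
        refine sum_congr rfl fun m hm => ?_
        rw [stirlingTransform_eq_sum_Iic_of_le A (mem_Iic.1 hm),
          stirlingTransform_eq_sum_Iic_of_le B (tsub_le_self : ν - m ≤ ν),
          mul_assoc, sum_mul_sum, mul_sum]
        refine sum_congr rfl fun w _ => ?_
        rw [mul_sum]
        refine sum_congr rfl fun u _ => ?_
        push_cast
        ring
    _ = ∑ w ∈ Iic ν, ∑ u ∈ Iic ν, A w * B u *
          (∑ m ∈ Iic ν, mchoose ν m * (mstirling m w * mstirling (ν - m) u) : ℕ) := by
        rw [sum_comm]
        refine sum_congr rfl fun w _ => ?_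
        rw [sum_comm]
        simp only [Nat.cast_sum, mul_sum]
    _ = _ :=
        sum_congr rfl fun w hw => sum_congr rfl fun u hu => by
          rw [sum_Iic_mchoose_mul_mstirling_mul_mstirling (mem_Iic.1 hw) (mem_Iic.1 hu)]

theorem stirlingTransform_binomialConv_eq_sum :
    stirlingTransform (binomialConv A B) ν =
      ∑ w ∈ Iic ν, ∑ u ∈ Iic ν, A w * B u * (mchoose (w + u) w * mstirling ν (w + u) : ℕ) := by
  calc stirlingTransform (binomialConv A B) ν
      = ∑ m ∈ Iic ν, ∑ p ∈ antidiagonal m,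
          A p.1 * B p.2 * (mchoose (p.1 + p.2) p.1 * mstirling ν (p.1 + p.2) : ℕ) := by
        refine sum_congr rfl fun m _ => ?_
        rw [binomialConv_eq_sum_antidiagonal, sum_mul]
        refine sum_congr rfl fun p hp => ?_
        rw [HasAntidiagonal.mem_antidiagonal.1 hp]
        push_cast
        ring
    _ = ∑ p ∈ Iic ν ×ˢ Iic ν with p.1 + p.2 ≤ ν,
          A p.1 * B p.2 * (mchoose (p.1 + p.2) p.1 * mstirling ν (p.1 + p.2) : ℕ) :=
        sum_Iic_sum_antidiagonal ν _
    _ = _ := by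
        rw [sum_filter_of_ne fun p _ hp => by_contra fun h => ?_, sum_product]
        rw [mstirling_eq_zero_of_not_le h, mul_zero, Nat.cast_zero, mul_zero] at hp
        exact hp rfl

theorem binomialConv_stirlingTransform :
    binomialConv (stirlingTransform A) (stirlingTransform B) =
      stirlingTransform (binomialConv A B) :=
  funext fun ν => (binomialConv_stirlingTransform_eq_sum A B ν).trans
    (stirlingTransform_binomialConv_eq_sum A B ν).symm

end Transforms

/-- For arbitrary real sequences `(A_ν)`, `(B_ν)` and any multiindex `ν`:
`∑_{m ≤ ν} C(ν,m) (∑_{w ≤ m} A_w S(m,w)) (∑_{u ≤ ν−m} B_u S(ν−m,u))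
  = ∑_{m ≤ ν} (∑_{w ≤ m} C(m,w) A_w B_{m−w}) S(ν,m)`. -/
theorem stirling_convolution_identity
    (A B : (ℕ →₀ ℕ) → ℝ) (ν : ℕ →₀ ℕ) :
    ∑ m ∈ Finset.Iic ν,
        (mchoose ν m : ℝ)
          * (∑ w ∈ Finset.Iic m, A w * (mstirling m w : ℝ))
          * (∑ u ∈ Finset.Iic (ν - m), B u * (mstirling (ν - m) u : ℝ))
      = ∑ m ∈ Finset.Iic ν,
          (∑ w ∈ Finset.Iic m, (mchoose m w : ℝ) * A w * B (m - w))
            * (mstirling ν m : ℝ) :=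
  congrFun (binomialConv_stirlingTransform A B) ν
end
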